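/- Let n ≥ 2, let u, v ∈ S_n, and let a, a' ∈ {1,...,n}^{n−1} be two sequences with u[i] ≤_{a_i} v[i] and u[i] ≤_{a'_i} v[i] for all i ∈ {1,...,n−1}. Then T_{u,v,a} = T_{u,v,a'} and T°_{u,v,a} = T°_{u,v,a'} (as sets of complete flags in ℂ^n). -/
import Mathlib


/-- Number of inversions of a permutation of `Fin n`. -/
def invNum {n : ℕ} (w : Equiv.Perm (Fin n)) : ℕ :=
  (Finset.univ.filter (fun p : Fin n × Fin n => p.1 < p.2 ∧ w p.2 < w p.1)).card

/-- Directed edge of the quantum Bruhat graph `Γ_n`. -/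
def qbEdge {n : ℕ} (w w' : Equiv.Perm (Fin n)) : Prop :=
  ∃ i j : Fin n, i < j ∧ w' = w * Equiv.swap i j ∧
    (invNum w' = invNum w + 1 ∨ invNum w' + 2 * (j.val - i.val) = invNum w + 1)

/-- Directed edge of the quantum Bruhat graph together with its weight vector in `ℤ^{n-1}`;
coordinate `m : Fin (n-1)` corresponds to the variable `q_{m+1}` (1-indexed). -/
def qbEdgeWt {n : ℕ} (w w' : Equiv.Perm (Fin n)) (c : Fin (n - 1) → ℤ) : Prop :=
  ∃ i j : Fin n, i < j ∧ w' = w * Equiv.swap i j ∧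
    ((invNum w' = invNum w + 1 ∧ c = 0) ∨
     (invNum w' + 2 * (j.val - i.val) = invNum w + 1 ∧
      c = fun m => if i.val ≤ m.val ∧ m.val < j.val then 1 else 0))

/-- Directed paths in the quantum Bruhat graph from `u` to `v`,
recording the number of edges and the total weight. -/
inductive qbPathWt {n : ℕ} :
    Equiv.Perm (Fin n) → Equiv.Perm (Fin n) → ℕ → (Fin (n - 1) → ℤ) → Prop
  | refl (u : Equiv.Perm (Fin n)) : qbPathWt u u 0 0
  | step {u w v : Equiv.Perm (Fin n)} {len : ℕ} {c c' : Fin (n - 1) → ℤ} :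
      qbEdgeWt u w c → qbPathWt w v len c' → qbPathWt u v (len + 1) (c + c')

/-- `ℓ(u,v)`: minimal number of edges of a directed path from `u` to `v` in `Γ_n`. -/
noncomputable def qbDist {n : ℕ} (u v : Equiv.Perm (Fin n)) : ℕ :=
  sInf {k | ∃ c, qbPathWt u v k c}

/-- `depth(A,B)`: max over `0 ≤ x ≤ n` of `#(B ∩ {1,…,x}) − #(A ∩ {1,…,x})`
(`Fin n` is 0-indexed, so `{1,…,x}` corresponds to `val < x`). -/
def depthAB {n : ℕ} (A B : Finset (Fin n)) : ℕ :=
  (Finset.range (n + 1)).sup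
    (fun x => (B.filter (fun b => b.val < x)).card - (A.filter (fun a => a.val < x)).card)

/-- `w[k] = {w(1),…,w(k)}`. -/
def permSet {n : ℕ} (w : Equiv.Perm (Fin n)) (k : ℕ) : Finset (Fin n) :=
  (Finset.univ.filter (fun i : Fin n => i.val < k)).image w

/-- The Gale order on subsets of `Fin n` (componentwise comparison of sorted lists). -/
def galeLE {n : ℕ} (A B : Finset (Fin n)) : Prop :=
  A.card = B.card ∧ ∀ (k : ℕ) (hA : A.card = k) (hB : B.card = k) (t : Fin k),
    A.orderEmbOfFin hA t ≤ B.orderEmbOfFin hB t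

/-- The shifted Gale order `≤_r`; `r : Fin n` encodes the paper's `r = r.val + 1`, and
`x ≤_r y` iff `x - r ≤ y - r` in `Fin n`. -/
def shiftedGaleLE {n : ℕ} (r : Fin n) (A B : Finset (Fin n)) : Prop :=
  galeLE (A.image (fun x => x - r)) (B.image (fun x => x - r))

/-- The closed cyclic interval `[a,b]_c` in `Fin n`. -/
def cycIcc {n : ℕ} (a b : Fin n) : Finset (Fin n) :=
  Finset.univ.filter (fun x => (x - a).val ≤ (b - a).val)

/-- The half-open cyclic interval `[a,b)_c` in `Fin n`. -/
def cycIco {n : ℕ} (a b : Fin n) : Finset (Fin n) :=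
  Finset.univ.filter (fun x => (x - a).val < (b - a).val)

/-- A complete flag in `ℂ^n`: a chain `F_0 ⊆ F_1 ⊆ ⋯ ⊆ F_n` with `dim F_i = i`. -/
structure CompleteFlag (n : ℕ) where
  space : ℕ → Submodule ℂ (Fin n → ℂ)
  mono : Monotone space
  dim_eq : ∀ i, i ≤ n → Module.finrank ℂ (space i) = i

/-- The coordinate projection `Proj_S` (zeroing out coordinates outside `S`). -/
noncomputable def projS {n : ℕ} (S : Finset (Fin n)) : (Fin n → ℂ) →ₗ[ℂ] (Fin n → ℂ) :=
  LinearMap.pi (fun i => if i ∈ S then LinearMap.proj i else 0)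

/-- `dim Proj_S (V)`. -/
noncomputable def projDim {n : ℕ} (S : Finset (Fin n)) (V : Submodule ℂ (Fin n → ℂ)) : ℕ :=
  Module.finrank ℂ (V.map (projS S))

/-- Membership in the tilted Richardson variety `T_{u,v,a}` (rank conditions, `≤`). -/
def memT {n : ℕ} [NeZero n] (u v : Equiv.Perm (Fin n)) (a : ℕ → Fin n)
    (F : CompleteFlag n) : Prop :=
  ∀ i : ℕ, 1 ≤ i → i ≤ n - 1 → ∀ j : Fin n,
    projDim (cycIcc (a i) j) (F.space i) ≤ (permSet u i ∩ cycIcc (a i) j).card ∧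
    projDim (cycIcc j (a i - 1)) (F.space i) ≤ (permSet v i ∩ cycIcc j (a i - 1)).card

/-- Membership in the open tilted Richardson variety `T°_{u,v,a}` (rank conditions, `=`). -/
def memT0 {n : ℕ} [NeZero n] (u v : Equiv.Perm (Fin n)) (a : ℕ → Fin n)
    (F : CompleteFlag n) : Prop :=
  ∀ i : ℕ, 1 ≤ i → i ≤ n - 1 → ∀ j : Fin n,
    projDim (cycIcc (a i) j) (F.space i) = (permSet u i ∩ cycIcc (a i) j).card ∧
    projDim (cycIcc j (a i - 1)) (F.space i) = (permSet v i ∩ cycIcc j (a i - 1)).card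

/-- `M` is a matrix representative of the flag `F`: the first `i` columns span `F_i`. -/
def IsFlagMatrix {n : ℕ} (F : CompleteFlag n) (M : Matrix (Fin n) (Fin n) ℂ) : Prop :=
  ∀ i : ℕ, i ≤ n →
    Submodule.span ℂ ((fun j : Fin n => M.transpose j) '' {j : Fin n | j.val < i}) = F.space i

/-- The Plücker minor `P_I(M)`: the determinant of the submatrix of `M` on rows `I`
and the first `#I` columns. -/
noncomputable def minorP {n : ℕ} (M : Matrix (Fin n) (Fin n) ℂ) (I : Finset (Fin n)) : ℂ :=
  Matrix.det (M.submatrix (fun t : Fin I.card => I.orderEmbOfFin rfl t)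
    (fun t : Fin I.card => Fin.castLE (by simpa using I.card_le_univ) t))

/-- The sequence `a` is flat for `(u,v)`. -/
def IsFlat {n : ℕ} (u v : Equiv.Perm (Fin n)) (a : ℕ → Fin n) : Prop :=
  (∀ k, 1 ≤ k → k ≤ n - 1 → shiftedGaleLE (a k) (permSet u k) (permSet v k)) ∧
  (∀ k, 2 ≤ k → k ≤ n - 1 → shiftedGaleLE (a k) (permSet u (k - 1)) (permSet v (k - 1)))

/-- The tilted Rothe diagram `D_a^↓(u)`; the pair `(i,k) : Fin n × Fin n` encodes the
paper's pair `(i.val + 1, k.val + 1)`. -/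
def Ddown {n : ℕ} (a : ℕ → Fin n) (u : Equiv.Perm (Fin n)) : Finset (Fin n × Fin n) :=
  Finset.univ.filter (fun p : Fin n × Fin n =>
    p.2.val < n - 1 ∧ (p.1 - a (p.2.val + 1)).val < (u p.2 - a (p.2.val + 1)).val ∧
      p.2.val < (u⁻¹ p.1).val)

/-- The tilted Rothe diagram `D_a^↑(v)`. -/
def Dup {n : ℕ} (a : ℕ → Fin n) (v : Equiv.Perm (Fin n)) : Finset (Fin n × Fin n) :=
  Finset.univ.filter (fun p : Fin n × Fin n =>
    p.2.val < n - 1 ∧ (v p.2 - a (p.2.val + 1)).val < (p.1 - a (p.2.val + 1)).val ∧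
      p.2.val < (v⁻¹ p.1).val)

/-- Membership in the cyclically rotated Grassmannian Richardson variety `R_{I,J,r}`. -/
def memR {n : ℕ} [NeZero n] (I J : Finset (Fin n)) (r : Fin n)
    (V : Submodule ℂ (Fin n → ℂ)) : Prop :=
  ∀ j : Fin n,
    projDim (cycIcc r j) V ≤ (I ∩ cycIcc r j).card ∧
    projDim (cycIcc j (r - 1)) V ≤ (J ∩ cycIcc j (r - 1)).card

/-! ### Auxiliary material for Statement 13 -/

section Aux

open Finset Module

variable {n : ℕ}

/-! #### Fin arithmetic helpers -/

lemma fin_sub_val (y z : Fin n) :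
    (y - z).val = if z.val ≤ y.val then y.val - z.val else y.val + n - z.val := by
  have hy := y.isLt; have hz := z.isLt
  rw [Fin.sub_def]
  show (n - z.val + y.val) % n = _
  split_ifs with h
  · have e : n - z.val + y.val = n + (y.val - z.val) := by omega
    rw [e, Nat.add_mod_left, Nat.mod_eq_of_lt (by omega)]
  · rw [Nat.mod_eq_of_lt (by omega)]; omega

lemma fin_one_val [NeZero n] (hn : 2 ≤ n) : (1 : Fin n).val = 1 := by
  rw [Fin.val_one']; exact Nat.mod_eq_of_lt (by omega)

lemma fin_add_one_val [NeZero n] (hn : 2 ≤ n) (b : Fin n) :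
    (b + 1).val = if b.val = n - 1 then 0 else b.val + 1 := by
  have hb := b.isLt
  rw [Fin.add_def]
  show (b.val + (1 : Fin n).val) % n = _
  rw [fin_one_val hn]
  split_ifs with h
  · have e : b.val + 1 = n := by omega
    rw [e, Nat.mod_self]
  · rw [Nat.mod_eq_of_lt (by omega)]

lemma fin_sub_one_val [NeZero n] (hn : 2 ≤ n) (z : Fin n) :
    (z - 1).val = if z.val = 0 then n - 1 else z.val - 1 := by
  have hz := z.isLt
  rw [fin_sub_val z 1, fin_one_val hn]
  split_ifs <;> omega

lemma fin_val_zero_iff [NeZero n] {x y : Fin n} : (x - y).val = 0 ↔ x = y := by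
  constructor
  · intro h
    have : x - y = 0 := Fin.ext (by simpa using h)
    exact sub_eq_zero.mp this
  · rintro rfl; simp

lemma val_sub_eq [NeZero n] (x b r' : Fin n) :
    (x - b).val = if (b - r').val ≤ (x - r').val then (x - r').val - (b - r').val
      else (x - r').val + n - (b - r').val := by
  have e : x - b = (x - r') - (b - r') := (sub_sub_sub_cancel_right x b r').symm
  rw [e, fin_sub_val]

lemma val_sub_one_sub_self [NeZero n] (hn : 2 ≤ n) (a : Fin n) :
    ((a - 1) - a).val = n - 1 := by
  rw [sub_right_comm, sub_self]
  rw [fin_sub_one_val hn]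
  simp

lemma val_sub_one_sub [NeZero n] (hn : 2 ≤ n) {x b : Fin n} (h : x ≠ b) :
    ((x - 1) - b).val = (x - b).val - 1 := by
  have hpos : (x - b).val ≠ 0 := fun h0 => h (fin_val_zero_iff.mp h0)
  rw [sub_right_comm, fin_sub_one_val hn (x - b), if_neg hpos]

lemma val_sub_pos [NeZero n] {x b : Fin n} (h : x ≠ b) : 0 < (x - b).val :=
  Nat.pos_of_ne_zero (fun h0 => h (fin_val_zero_iff.mp h0))

lemma val_sub_lt_last [NeZero n] (hn : 2 ≤ n) {j b : Fin n} (h : j ≠ b - 1) :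
    (j - b).val < n - 1 := by
  have h1 : ((b - 1) - b).val = n - 1 := val_sub_one_sub_self hn b
  have h2 := (j - b).isLt
  rcases Nat.lt_or_ge ((j - b).val) (n - 1) with h3 | h3
  · exact h3
  · exfalso
    have he : (j - b).val = n - 1 := by omega
    have : j - b = (b - 1) - b := Fin.ext (by rw [h1]; exact he)
    exact h (sub_left_injective this)

lemma val_add_one_sub [NeZero n] (hn : 2 ≤ n) {x b : Fin n} (h : x ≠ b - 1) :
    ((x + 1) - b).val = (x - b).val + 1 := by
  have hlt : (x - b).val < n - 1 := val_sub_lt_last hn h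
  rw [add_sub_right_comm, fin_add_one_val hn (x - b), if_neg (by omega)]

/-! #### Cyclic interval helpers -/

lemma mem_cycIcc {a b x : Fin n} : x ∈ cycIcc a b ↔ (x - a).val ≤ (b - a).val := by
  simp [cycIcc]

lemma cycIcc_full [NeZero n] (hn : 2 ≤ n) (a : Fin n) : cycIcc a (a - 1) = univ := by
  ext x
  simp only [mem_cycIcc, Finset.mem_univ, iff_true]
  rw [val_sub_one_sub_self hn]
  have := (x - a).isLt
  omega

lemma cycIcc_split [NeZero n] (hn : 2 ≤ n) {a b c : Fin n}
    (h : (b - a).val < (c - a).val) :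
    cycIcc a c = cycIcc a b ∪ cycIcc (b + 1) c ∧ Disjoint (cycIcc a b) (cycIcc (b + 1) c) := by
  have key : ∀ x : Fin n, ((x - a).val ≤ (c - a).val ↔
      ((x - a).val ≤ (b - a).val ∨ (x - (b + 1)).val ≤ (c - (b + 1)).val)) ∧
      ¬((x - a).val ≤ (b - a).val ∧ (x - (b + 1)).val ≤ (c - (b + 1)).val) := by
    intro x
    have h1 := fin_sub_val x a
    have h2 := fin_sub_val c a
    have h3 := fin_sub_val b a
    have h4 := fin_sub_val x (b + 1)
    have h5 := fin_sub_val c (b + 1)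
    have h6 := fin_add_one_val hn b
    rw [h6] at h4 h5
    have := x.isLt; have := a.isLt; have := b.isLt; have := c.isLt
    rw [h2, h3] at h
    constructor
    · rw [h1, h2, h3, h4, h5]
      split_ifs at * <;> omega
    · rw [h1, h3, h4, h5]
      split_ifs at * <;> omega
  constructor
  · ext x
    simp only [mem_cycIcc, Finset.mem_union]
    exact (key x).1
  · rw [Finset.disjoint_left]
    intro x hx hx'
    rw [mem_cycIcc] at hx hx'
    exact (key x).2 ⟨hx, hx'⟩

lemma cycIcc_compl [NeZero n] (hn : 2 ≤ n) {a b : Fin n} (h : b ≠ a - 1) :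
    univ = cycIcc a b ∪ cycIcc (b + 1) (a - 1) ∧
      Disjoint (cycIcc a b) (cycIcc (b + 1) (a - 1)) := by
  have hval : (b - a).val < ((a - 1) - a).val := by
    rw [val_sub_one_sub_self hn]
    exact val_sub_lt_last hn h
  obtain ⟨hU, hD⟩ := cycIcc_split hn hval
  rw [cycIcc_full hn a] at hU
  exact ⟨hU, hD⟩

lemma card_inter_split {K A B S : Finset (Fin n)} (hU : S = A ∪ B) (hD : Disjoint A B) :
    (K ∩ A).card + (K ∩ B).card = (K ∩ S).card := by
  rw [hU, Finset.inter_union_distrib_left,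
    Finset.card_union_of_disjoint (hD.mono Finset.inter_subset_right Finset.inter_subset_right)]

/-! #### Linear algebra helpers -/

lemma projS_apply (S : Finset (Fin n)) (x : Fin n → ℂ) (i : Fin n) :
    projS S x i = if i ∈ S then x i else 0 := by
  simp only [projS, LinearMap.pi_apply]
  split_ifs with h <;> simp [h]

lemma projS_comp {S T : Finset (Fin n)} (h : S ⊆ T) :
    (projS S).comp (projS T) = projS S := by
  ext x i
  simp only [LinearMap.comp_apply, projS_apply]
  by_cases hi : i ∈ S
  · simp [hi, h hi]
  · simp [hi]

lemma projS_univ : projS (univ : Finset (Fin n)) = LinearMap.id := by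
  ext x i; simp [projS_apply]

lemma mem_ker_projS {S : Finset (Fin n)} {x : Fin n → ℂ} :
    x ∈ LinearMap.ker (projS S) ↔ ∀ i ∈ S, x i = 0 := by
  rw [LinearMap.mem_ker, funext_iff]
  constructor
  · intro h i hi; have := h i; rwa [projS_apply, if_pos hi] at this
  · intro h i; rw [projS_apply]; split_ifs with hi
    · exact h i hi
    · rfl

/-- The dimension of the part of `V` killed by `projS S`. -/
noncomputable def kerDim (S : Finset (Fin n)) (V : Submodule ℂ (Fin n → ℂ)) : ℕ :=
  finrank ℂ (V ⊓ LinearMap.ker (projS S) : Submodule ℂ (Fin n → ℂ))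

set_option synthInstance.maxHeartbeats 1000000 in
set_option maxHeartbeats 1000000 in
lemma rank_nullity (S : Finset (Fin n)) (V : Submodule ℂ (Fin n → ℂ)) :
    projDim S V + kerDim S V = finrank ℂ V := by
  classical
  have h := LinearMap.finrank_range_add_finrank_ker ((projS S).domRestrict V)
  rw [LinearMap.range_domRestrict, LinearMap.ker_domRestrict] at h
  have e : Submodule.comap V.subtype (LinearMap.ker (projS S))
      = Submodule.comap V.subtype (V ⊓ LinearMap.ker (projS S)) := by
    rw [Submodule.comap_inf, Submodule.comap_subtype_self, top_inf_eq]
  have e2 : finrank ℂ (Submodule.comap V.subtype (LinearMap.ker (projS S))) = kerDim S V := by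
    rw [e, kerDim]
    exact (Submodule.comapSubtypeEquivOfLe (inf_le_left :
      V ⊓ LinearMap.ker (projS S) ≤ V)).finrank_eq
  rw [e2] at h
  exact h

lemma projDim_le_finrank (S : Finset (Fin n)) (V : Submodule ℂ (Fin n → ℂ)) :
    projDim S V ≤ finrank ℂ V :=
  Submodule.finrank_map_le _ _

lemma projDim_univ (V : Submodule ℂ (Fin n → ℂ)) :
    projDim (univ : Finset (Fin n)) V = finrank ℂ V := by
  rw [projDim, projS_univ, Submodule.map_id]

lemma ker_projS_anti {S T : Finset (Fin n)} (h : S ⊆ T) :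
    LinearMap.ker (projS T) ≤ LinearMap.ker (projS S) := by
  intro x hx
  rw [mem_ker_projS] at hx ⊢
  exact fun i hi => hx i (h hi)

lemma projDim_union_le (A B : Finset (Fin n)) (V : Submodule ℂ (Fin n → ℂ)) :
    projDim (A ∪ B) V ≤ projDim A V + projDim B V := by
  classical
  set W := V.map (projS (A ∪ B)) with hW
  have h1 : projDim A W + kerDim A W = finrank ℂ W := rank_nullity A W
  have h2 : W.map (projS A) = V.map (projS A) := by
    rw [hW, ← Submodule.map_comp, projS_comp (subset_union_left)]
  have h3 : (W ⊓ LinearMap.ker (projS A) : Submodule ℂ (Fin n → ℂ)) ≤ V.map (projS B) := by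
    intro w hw0
    rw [Submodule.mem_inf] at hw0
    obtain ⟨hw, hker⟩ := hw0
    rw [hW] at hw
    obtain ⟨v, hv, rfl⟩ := hw
    refine ⟨v, hv, ?_⟩
    rw [mem_ker_projS] at hker
    funext i
    rw [projS_apply, projS_apply]
    by_cases hiB : i ∈ B
    · simp [hiB, Finset.mem_union]
    · by_cases hiA : i ∈ A
      · have := hker i hiA
        rw [projS_apply, if_pos (Finset.mem_union_left _ hiA)] at this
        simp [hiB, this]
      · simp [hiA, hiB]
  have h4 : kerDim A W ≤ projDim B V := by
    rw [kerDim, projDim]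
    exact Submodule.finrank_mono h3
  have h5 : projDim (A ∪ B) V = finrank ℂ W := rfl
  have h6 : projDim A W = projDim A V := by
    rw [projDim, projDim, h2]
  omega

lemma kerDim_superadd {X Y : Finset (Fin n)} (h : X ∪ Y = univ)
    (V : Submodule ℂ (Fin n → ℂ)) :
    kerDim X V + kerDim Y V ≤ kerDim (X ∩ Y) V := by
  classical
  set s := (V ⊓ LinearMap.ker (projS X) : Submodule ℂ (Fin n → ℂ))
  set t := (V ⊓ LinearMap.ker (projS Y) : Submodule ℂ (Fin n → ℂ))
  have hbot : s ⊓ t = ⊥ := by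
    rw [eq_bot_iff]
    intro x hx0
    rw [Submodule.mem_inf] at hx0
    obtain ⟨hxs, hxt⟩ := hx0
    rw [Submodule.mem_inf] at hxs hxt
    have hx := hxs.2; have hy := hxt.2
    rw [mem_ker_projS] at hx hy
    have : x = 0 := by
      funext i
      have hi : i ∈ X ∪ Y := by rw [h]; exact Finset.mem_univ i
      rcases Finset.mem_union.1 hi with hi | hi
      · exact hx i hi
      · exact hy i hi
    simp [this]
  have hsup : s ⊔ t ≤ V ⊓ LinearMap.ker (projS (X ∩ Y)) := by
    apply sup_le
    · exact inf_le_inf_left _ (ker_projS_anti Finset.inter_subset_left)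
    · exact inf_le_inf_left _ (ker_projS_anti Finset.inter_subset_right)
  have := Submodule.finrank_sup_add_finrank_inf_eq s t
  rw [hbot] at this
  simp only [finrank_bot, add_zero] at this
  calc finrank ℂ s + finrank ℂ t = finrank ℂ (s ⊔ t : Submodule ℂ (Fin n → ℂ)) := this.symm
    _ ≤ _ := Submodule.finrank_mono hsup

lemma kerDim_superadd' {X Y A B Z : Finset (Fin n)} (V : Submodule ℂ (Fin n → ℂ))
    (hXA : univ = X ∪ A) (dXA : Disjoint X A) (hYB : univ = Y ∪ B) (dYB : Disjoint Y B)
    (hZ : univ = Z ∪ (A ∪ B)) (dZ : Disjoint Z (A ∪ B)) (dAB : Disjoint A B) :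
    kerDim X V + kerDim Y V ≤ kerDim Z V := by
  have memXA : ∀ x : Fin n, x ∈ X ∨ x ∈ A := by
    intro x
    have : x ∈ X ∪ A := by rw [← hXA]; exact Finset.mem_univ x
    exact Finset.mem_union.1 this
  have memYB : ∀ x : Fin n, x ∈ Y ∨ x ∈ B := by
    intro x
    have : x ∈ Y ∪ B := by rw [← hYB]; exact Finset.mem_univ x
    exact Finset.mem_union.1 this
  have memZ : ∀ x : Fin n, x ∈ Z ∨ (x ∈ A ∨ x ∈ B) := by
    intro x
    have : x ∈ Z ∪ (A ∪ B) := by rw [← hZ]; exact Finset.mem_univ x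
    simpa [Finset.mem_union] using this
  rw [Finset.disjoint_left] at dXA dYB dZ dAB
  have hXY : X ∪ Y = univ := by
    ext x
    simp only [Finset.mem_union, Finset.mem_univ, iff_true]
    rcases memXA x with hx | hx
    · exact Or.inl hx
    · rcases memYB x with hy | hy
      · exact Or.inr hy
      · exact absurd hy (dAB hx)
  have hZeq : Z = X ∩ Y := by
    ext x
    simp only [Finset.mem_inter]
    constructor
    · intro hz
      have hnAB : x ∉ A ∪ B := fun hc => dZ hz hc
      rw [Finset.mem_union] at hnAB
      push_neg at hnAB
      constructor
      · rcases memXA x with h | h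
        · exact h
        · exact absurd h hnAB.1
      · rcases memYB x with h | h
        · exact h
        · exact absurd h hnAB.2
    · rintro ⟨hx, hy⟩
      rcases memZ x with h | h
      · exact h
      · rcases h with h | h
        · exact absurd h (fun hc => dXA hx hc)
        · exact absurd h (fun hc => dYB hy hc)
  rw [hZeq]
  exact kerDim_superadd hXY V

/-! #### Gale order counting -/

lemma card_filter_emb {k : ℕ} {S : Finset (Fin n)} (h : S.card = k) (P : Fin n → Prop)
    [DecidablePred P] :
    (S.filter P).card = (univ.filter (fun t : Fin k => P (S.orderEmbOfFin h t))).card := by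
  classical
  rw [← Finset.card_image_of_injective (univ.filter (fun t : Fin k => P (S.orderEmbOfFin h t)))
    (S.orderEmbOfFin h).injective]
  congr 1
  ext x
  simp only [Finset.mem_filter, Finset.mem_image, Finset.mem_univ, true_and]
  constructor
  · rintro ⟨hxS, hPx⟩
    have : x ∈ Set.range (S.orderEmbOfFin h) := by
      rw [Finset.range_orderEmbOfFin]; exact hxS
    obtain ⟨t, ht⟩ := this
    exact ⟨t, by rw [ht]; exact hPx, ht⟩
  · rintro ⟨t, hPt, rfl⟩
    exact ⟨Finset.orderEmbOfFin_mem S h t, hPt⟩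

lemma galeLE_prefix {A B : Finset (Fin n)} (h : galeLE A B) (m : ℕ) :
    (B.filter (fun y => y.val ≤ m)).card ≤ (A.filter (fun y => y.val ≤ m)).card := by
  classical
  obtain ⟨hcard, hle⟩ := h
  have hA : A.card = B.card := hcard
  have hB : B.card = B.card := rfl
  rw [card_filter_emb hA (fun y => y.val ≤ m), card_filter_emb hB (fun y => y.val ≤ m)]
  apply Finset.card_le_card
  intro t ht
  simp only [Finset.mem_filter, Finset.mem_univ, true_and] at ht ⊢
  exact le_trans (Fin.val_le_of_le (hle _ hA hB t)) ht

lemma galeLE_suffix {A B : Finset (Fin n)} (h : galeLE A B) (m : ℕ) :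
    (A.filter (fun y => m ≤ y.val)).card ≤ (B.filter (fun y => m ≤ y.val)).card := by
  classical
  obtain ⟨hcard, hle⟩ := h
  have hA : A.card = B.card := hcard
  have hB : B.card = B.card := rfl
  rw [card_filter_emb hA (fun y => m ≤ y.val), card_filter_emb hB (fun y => m ≤ y.val)]
  apply Finset.card_le_card
  intro t ht
  simp only [Finset.mem_filter, Finset.mem_univ, true_and] at ht ⊢
  exact le_trans ht (Fin.val_le_of_le (hle _ hA hB t))

lemma image_inter_cycIcc_prefix (K : Finset (Fin n)) (r' b : Fin n) :
    ((K ∩ cycIcc r' b).image (fun x => x - r'))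
      = (K.image (fun x => x - r')).filter (fun y => y.val ≤ (b - r').val) := by
  classical
  ext y
  simp only [Finset.mem_image, Finset.mem_filter, Finset.mem_inter, mem_cycIcc]
  constructor
  · rintro ⟨x, ⟨hK, hc⟩, rfl⟩
    exact ⟨⟨x, hK, rfl⟩, hc⟩
  · rintro ⟨⟨x, hK, rfl⟩, hy⟩
    exact ⟨x, ⟨hK, hy⟩, rfl⟩

lemma mem_cycIcc_suffix [NeZero n] (hn : 2 ≤ n) {r b x : Fin n} :
    x ∈ cycIcc b (r - 1) ↔ (b - r).val ≤ (x - r).val := by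
  rw [mem_cycIcc]
  have h1 := fin_sub_val x b
  have h2 := fin_sub_val (r - 1) b
  have h3 := fin_sub_one_val hn r
  rw [h3] at h2
  have h4 := fin_sub_val b r
  have h5 := fin_sub_val x r
  have := x.isLt; have := b.isLt; have := r.isLt
  rw [h1, h2, h4, h5]
  split_ifs at * <;> omega

lemma image_inter_cycIcc_suffix [NeZero n] (hn : 2 ≤ n) (K : Finset (Fin n)) (r b : Fin n) :
    ((K ∩ cycIcc b (r - 1)).image (fun x => x - r))
      = (K.image (fun x => x - r)).filter (fun y => (b - r).val ≤ y.val) := by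
  classical
  ext y
  simp only [Finset.mem_image, Finset.mem_filter, Finset.mem_inter, mem_cycIcc_suffix hn]
  constructor
  · rintro ⟨x, ⟨hK, hc⟩, rfl⟩
    exact ⟨⟨x, hK, rfl⟩, hc⟩
  · rintro ⟨⟨x, hK, rfl⟩, hy⟩
    exact ⟨x, ⟨hK, hy⟩, rfl⟩

lemma shifted_count_prefix {I J : Finset (Fin n)} {r' : Fin n}
    (h : shiftedGaleLE r' I J) (b : Fin n) :
    (J ∩ cycIcc r' b).card ≤ (I ∩ cycIcc r' b).card := by
  classical
  have hinj : Function.Injective (fun x : Fin n => x - r') := by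
    intro u v huv
    have h2 := congrArg Fin.val huv
    simp only [fin_sub_val] at h2
    have := u.isLt; have := v.isLt; have := r'.isLt
    apply Fin.ext
    split_ifs at h2 <;> omega
  have e1 : (J ∩ cycIcc r' b).card
      = ((J.image (fun x => x - r')).filter (fun y => y.val ≤ (b - r').val)).card := by
    rw [← image_inter_cycIcc_prefix, Finset.card_image_of_injective _ hinj]
  have e2 : (I ∩ cycIcc r' b).card
      = ((I.image (fun x => x - r')).filter (fun y => y.val ≤ (b - r').val)).card := by
    rw [← image_inter_cycIcc_prefix, Finset.card_image_of_injective _ hinj]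
  rw [e1, e2]
  exact galeLE_prefix h _

lemma shifted_count_suffix [NeZero n] (hn : 2 ≤ n) {I J : Finset (Fin n)} {r : Fin n}
    (h : shiftedGaleLE r I J) (b : Fin n) :
    (I ∩ cycIcc b (r - 1)).card ≤ (J ∩ cycIcc b (r - 1)).card := by
  classical
  have hinj : Function.Injective (fun x : Fin n => x - r) := by
    intro u v huv
    have h2 := congrArg Fin.val huv
    simp only [fin_sub_val] at h2
    have := u.isLt; have := v.isLt; have := r.isLt
    apply Fin.ext
    split_ifs at h2 <;> omega
  have e1 : (I ∩ cycIcc b (r - 1)).card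
      = ((I.image (fun x => x - r)).filter (fun y => (b - r).val ≤ y.val)).card := by
    rw [← image_inter_cycIcc_suffix hn, Finset.card_image_of_injective _ hinj]
  have e2 : (J ∩ cycIcc b (r - 1)).card
      = ((J.image (fun x => x - r)).filter (fun y => (b - r).val ≤ y.val)).card := by
    rw [← image_inter_cycIcc_suffix hn, Finset.card_image_of_injective _ hinj]
  rw [e1, e2]
  exact galeLE_suffix h _

lemma permSet_card [NeZero n] (w : Equiv.Perm (Fin n)) {k : ℕ} (hk : k ≤ n) :
    (permSet w k).card = k := by
  classical
  have h2 : ((univ.filter (fun i : Fin n => i.val < k)).image Fin.val) = Finset.range k := by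
    ext m
    simp only [Finset.mem_image, Finset.mem_filter, Finset.mem_univ, true_and,
      Finset.mem_range]
    constructor
    · rintro ⟨x, hx, rfl⟩; exact hx
    · intro hm; exact ⟨⟨m, lt_of_lt_of_le hm hk⟩, hm, rfl⟩
  have h3 : (univ.filter (fun i : Fin n => i.val < k)).card = k := by
    calc (univ.filter (fun i : Fin n => i.val < k)).card
        = ((univ.filter (fun i : Fin n => i.val < k)).image Fin.val).card :=
          (Finset.card_image_of_injective _ Fin.val_injective).symm
      _ = (Finset.range k).card := by rw [h2]
      _ = k := Finset.card_range k
  rw [permSet, Finset.card_image_of_injective _ w.injective]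
  exact h3

end Aux


/-! #### The transfer lemmas -/

section Transfer

open Finset Module

variable {n : ℕ} [NeZero n]

lemma sub_one_injective (hn : 2 ≤ n) : Function.Injective (fun x : Fin n => x - 1) := by
  intro u v huv
  have h2 := congrArg Fin.val huv
  simp only [fin_sub_one_val hn] at h2
  have := u.isLt; have := v.isLt
  apply Fin.ext
  split_ifs at h2 <;> omega

lemma sub_right_cancel {x y b : Fin n} (h : (x - b).val = (y - b).val) : x = y := by
  rw [fin_sub_val, fin_sub_val] at h
  have := x.isLt; have := y.isLt; have := b.isLt
  apply Fin.ext
  split_ifs at h <;> omega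

lemma transfer_le (hn : 2 ≤ n) (V : Submodule ℂ (Fin n → ℂ)) (I J : Finset (Fin n))
    (r r' : Fin n) (d : ℕ) (hd : finrank ℂ V = d) (hI : I.card = d) (hJ : J.card = d)
    (hkey : (I ∩ cycIcc r' (r - 1)).card = (J ∩ cycIcc r' (r - 1)).card)
    (h1 : ∀ j, projDim (cycIcc r j) V ≤ (I ∩ cycIcc r j).card)
    (h2 : ∀ j, projDim (cycIcc j (r - 1)) V ≤ (J ∩ cycIcc j (r - 1)).card) :
    (∀ j, projDim (cycIcc r' j) V ≤ (I ∩ cycIcc r' j).card) ∧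
    (∀ j, projDim (cycIcc j (r' - 1)) V ≤ (J ∩ cycIcc j (r' - 1)).card) := by
  by_cases hrr : r = r'
  · subst hrr; exact ⟨h1, h2⟩
  have hρpos : 0 < (r - r').val := val_sub_pos hrr
  have hρlt : (r - r').val < n := (r - r').isLt
  have hprm1 : ((r - 1) - r').val = (r - r').val - 1 := val_sub_one_sub hn hrr
  have err : (r - 1) + 1 = r := sub_add_cancel r 1
  have err' : (r' - 1) + 1 = r' := sub_add_cancel r' 1
  obtain ⟨WU, WD⟩ := cycIcc_compl hn (a := r') (b := r - 1)
    (fun h => hrr (sub_one_injective hn h))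
  rw [err] at WU WD
  have cIW := card_inter_split (K := I) WU WD
  have cJW := card_inter_split (K := J) WU WD
  rw [Finset.inter_univ, hI] at cIW
  rw [Finset.inter_univ, hJ] at cJW
  constructor
  · -- I-side
    intro j
    rcases Nat.lt_or_ge ((j - r').val) ((r - r').val) with hc | hc
    · -- case B : p j < ρ
      by_cases hjr : j = r - 1
      · rw [hjr]
        calc projDim (cycIcc r' (r - 1)) V ≤ (J ∩ cycIcc r' (r - 1)).card := h2 r'
          _ = (I ∩ cycIcc r' (r - 1)).card := hkey.symm
      · have hjr' : j ≠ r' - 1 := by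
          intro he; subst he
          rw [val_sub_one_sub_self hn] at hc
          omega
        obtain ⟨P1U, P1D⟩ := cycIcc_compl hn (a := r') (b := j) hjr'
        obtain ⟨S2U, S2D⟩ := cycIcc_compl hn (a := r) (b := j) hjr
        have hpj1 : ((j + 1) - r').val = (j - r').val + 1 := val_add_one_sub hn hjr'
        have hpjne : (j - r').val ≠ (r - r').val - 1 := by
          intro he
          exact hjr (sub_right_cancel (show (j - r').val = ((r - 1) - r').val by
            rw [hprm1]; exact he))
        have hcond : ((r - 1) - (j + 1)).val < ((r' - 1) - (j + 1)).val := by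
          have e1 := val_sub_eq (r - 1) (j + 1) r'
          have e2 := val_sub_eq (r' - 1) (j + 1) r'
          rw [hpj1, hprm1] at e1
          rw [hpj1, val_sub_one_sub_self hn r'] at e2
          have := (j - r').isLt
          rw [e1, e2]
          split_ifs <;> omega
        obtain ⟨P2U, P2D⟩ := cycIcc_split hn hcond
        rw [err] at P2U P2D
        have hZ : univ = cycIcc r' j ∪ (cycIcc (j + 1) (r - 1) ∪ cycIcc r (r' - 1)) := by
          rw [← P2U]; exact P1U
        have dZ : Disjoint (cycIcc r' j) (cycIcc (j + 1) (r - 1) ∪ cycIcc r (r' - 1)) := by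
          rw [← P2U]; exact P1D
        have hsup := kerDim_superadd' V S2U S2D WU WD hZ dZ P2D
        have n1 := rank_nullity (cycIcc r j) V
        have n2 := rank_nullity (cycIcc r' (r - 1)) V
        have n3 := rank_nullity (cycIcc r' j) V
        rw [hd] at n1 n2 n3
        have b1 := h1 j
        have b2 := h2 r'
        have c1 := card_inter_split (K := I) S2U S2D
        have c3 := card_inter_split (K := I) P1U P1D
        have c4 := card_inter_split (K := I) P2U P2D
        rw [Finset.inter_univ, hI] at c1 c3
        omega
    · -- case A : ρ ≤ p j
      have hcond : ((r - 1) - r').val < (j - r').val := by rw [hprm1]; omega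
      obtain ⟨SU, SD⟩ := cycIcc_split hn hcond
      rw [err] at SU SD
      have hle := projDim_union_le (cycIcc r' (r - 1)) (cycIcc r j) V
      have e2 : projDim (cycIcc r' j) V
          = projDim (cycIcc r' (r - 1) ∪ cycIcc r j) V := by rw [SU]
      have b1 := h1 j
      have b2 := h2 r'
      have c1 := card_inter_split (K := I) SU SD
      omega
  · -- J-side
    intro j
    by_cases hjr' : j = r'
    · rw [hjr', cycIcc_full hn r', projDim_univ, Finset.inter_univ, hJ, hd]
    · by_cases hjr : j = r
      · rw [hjr]
        have b1 := h1 (r' - 1)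
        omega
      · rcases Nat.lt_or_ge ((j - r').val) ((r - r').val) with hc | hc
        · -- q j < ρ
          have hqpos : 0 < (j - r').val := val_sub_pos hjr'
          have hcond : ((r - 1) - j).val < ((r' - 1) - j).val := by
            have e1 := val_sub_eq (r - 1) j r'
            have e2 := val_sub_eq (r' - 1) j r'
            rw [hprm1] at e1
            rw [val_sub_one_sub_self hn r'] at e2
            have := (j - r').isLt
            rw [e1, e2]
            split_ifs <;> omega
          obtain ⟨SU, SD⟩ := cycIcc_split hn hcond
          rw [err] at SU SD
          have hle := projDim_union_le (cycIcc j (r - 1)) (cycIcc r (r' - 1)) V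
          have e2 : projDim (cycIcc j (r' - 1)) V
              = projDim (cycIcc j (r - 1) ∪ cycIcc r (r' - 1)) V := by rw [SU]
          have b1 := h2 j
          have b2 := h1 (r' - 1)
          have cJ := card_inter_split (K := J) SU SD
          omega
        · -- q j > ρ
          have hqne : (j - r').val ≠ (r - r').val := fun he => hjr (sub_right_cancel he)
          obtain ⟨C1U, C1D⟩ := cycIcc_compl hn (a := j) (b := r' - 1)
            (fun h => hjr' ((sub_one_injective hn h).symm))
          rw [err'] at C1U C1D
          obtain ⟨C2U, C2D⟩ := cycIcc_compl hn (a := j) (b := r - 1)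
            (fun h => hjr ((sub_one_injective hn h).symm))
          rw [err] at C2U C2D
          have hqm1 : ((j - 1) - r').val = (j - r').val - 1 := val_sub_one_sub hn hjr'
          have hcond2 : ((r - 1) - r').val < ((j - 1) - r').val := by
            rw [hprm1, hqm1]; omega
          obtain ⟨P2U, P2D⟩ := cycIcc_split hn hcond2
          rw [err] at P2U P2D
          have WU' : univ = cycIcc r (r' - 1) ∪ cycIcc r' (r - 1) := by
            rw [Finset.union_comm]; exact WU
          have WD' : Disjoint (cycIcc r (r' - 1)) (cycIcc r' (r - 1)) := WD.symm
          have hZ : univ = cycIcc j (r' - 1) ∪ (cycIcc r' (r - 1) ∪ cycIcc r (j - 1)) := by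
            rw [← P2U]; exact C1U
          have dZ : Disjoint (cycIcc j (r' - 1)) (cycIcc r' (r - 1) ∪ cycIcc r (j - 1)) := by
            rw [← P2U]; exact C1D
          have hsup := kerDim_superadd' V WU' WD' C2U C2D hZ dZ P2D
          have n1 := rank_nullity (cycIcc r (r' - 1)) V
          have n2 := rank_nullity (cycIcc j (r - 1)) V
          have n3 := rank_nullity (cycIcc j (r' - 1)) V
          rw [hd] at n1 n2 n3
          have b1 := h1 (r' - 1)
          have b2 := h2 j
          have cJ1 := card_inter_split (K := J) C1U C1D
          have cJ2 := card_inter_split (K := J) C2U C2D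
          have cJ3 := card_inter_split (K := J) P2U P2D
          rw [Finset.inter_univ, hJ] at cJ1 cJ2
          omega

lemma transfer_eq (hn : 2 ≤ n) (V : Submodule ℂ (Fin n → ℂ)) (I J : Finset (Fin n))
    (r r' : Fin n) (d : ℕ) (hd : finrank ℂ V = d) (hI : I.card = d) (hJ : J.card = d)
    (hkey : (I ∩ cycIcc r' (r - 1)).card = (J ∩ cycIcc r' (r - 1)).card)
    (h1 : ∀ j, projDim (cycIcc r j) V = (I ∩ cycIcc r j).card)
    (h2 : ∀ j, projDim (cycIcc j (r - 1)) V = (J ∩ cycIcc j (r - 1)).card) :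
    (∀ j, projDim (cycIcc r' j) V = (I ∩ cycIcc r' j).card) ∧
    (∀ j, projDim (cycIcc j (r' - 1)) V = (J ∩ cycIcc j (r' - 1)).card) := by
  by_cases hrr : r = r'
  · subst hrr; exact ⟨h1, h2⟩
  obtain ⟨tIle, tJle⟩ := transfer_le hn V I J r r' d hd hI hJ hkey
    (fun j => (h1 j).le) (fun j => (h2 j).le)
  have hρpos : 0 < (r - r').val := val_sub_pos hrr
  have hρlt : (r - r').val < n := (r - r').isLt
  have hprm1 : ((r - 1) - r').val = (r - r').val - 1 := val_sub_one_sub hn hrr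
  have err : (r - 1) + 1 = r := sub_add_cancel r 1
  have err' : (r' - 1) + 1 = r' := sub_add_cancel r' 1
  obtain ⟨WU, WD⟩ := cycIcc_compl hn (a := r') (b := r - 1)
    (fun h => hrr (sub_one_injective hn h))
  rw [err] at WU WD
  have cIW := card_inter_split (K := I) WU WD
  have cJW := card_inter_split (K := J) WU WD
  rw [Finset.inter_univ, hI] at cIW
  rw [Finset.inter_univ, hJ] at cJW
  constructor
  · -- I-side
    intro j
    refine le_antisymm (tIle j) ?_
    rcases Nat.lt_or_ge ((j - r').val) ((r - r').val) with hc | hc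
    · -- p j < ρ : direct split of [r, j]
      have hcond : ((r' - 1) - r).val < (j - r).val := by
        have e1 := val_sub_eq (r' - 1) r r'
        have e2 := val_sub_eq j r r'
        rw [val_sub_one_sub_self hn r'] at e1
        have := (j - r').isLt
        rw [e1, e2]
        split_ifs <;> omega
      obtain ⟨SU, SD⟩ := cycIcc_split hn hcond
      rw [err'] at SU SD
      have hle := projDim_union_le (cycIcc r (r' - 1)) (cycIcc r' j) V
      have e2 : projDim (cycIcc r j) V
          = projDim (cycIcc r (r' - 1) ∪ cycIcc r' j) V := by rw [SU]
      have b1 := h1 j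
      have b2 := h1 (r' - 1)
      have cI := card_inter_split (K := I) SU SD
      omega
    · -- p j ≥ ρ
      by_cases hjr' : j = r' - 1
      · rw [hjr', cycIcc_full hn r', projDim_univ, Finset.inter_univ, hI, hd]
      · have hjr : j ≠ r - 1 := by
          intro he; subst he
          rw [hprm1] at hc
          omega
        obtain ⟨P1U, P1D⟩ := cycIcc_compl hn (a := r') (b := j) hjr'
        obtain ⟨S2U, S2D⟩ := cycIcc_compl hn (a := r) (b := j) hjr
        have hpj1 : ((j + 1) - r').val = (j - r').val + 1 := val_add_one_sub hn hjr'
        have hpjlt : (j - r').val < n - 1 := val_sub_lt_last hn hjr'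
        have hcond : ((r' - 1) - (j + 1)).val < ((r - 1) - (j + 1)).val := by
          have e1 := val_sub_eq (r' - 1) (j + 1) r'
          have e2 := val_sub_eq (r - 1) (j + 1) r'
          rw [hpj1, val_sub_one_sub_self hn r'] at e1
          rw [hpj1, hprm1] at e2
          rw [e1, e2]
          split_ifs <;> omega
        obtain ⟨P2U, P2D⟩ := cycIcc_split hn hcond
        rw [err'] at P2U P2D
        have WU' : univ = cycIcc r (r' - 1) ∪ cycIcc r' (r - 1) := by
          rw [Finset.union_comm]; exact WU
        have WD' : Disjoint (cycIcc r (r' - 1)) (cycIcc r' (r - 1)) := WD.symm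
        have hZ : univ = cycIcc r j ∪ (cycIcc (j + 1) (r' - 1) ∪ cycIcc r' (r - 1)) := by
          rw [← P2U]; exact S2U
        have dZ : Disjoint (cycIcc r j) (cycIcc (j + 1) (r' - 1) ∪ cycIcc r' (r - 1)) := by
          rw [← P2U]; exact S2D
        have hsup := kerDim_superadd' V P1U P1D WU' WD' hZ dZ P2D
        have n1 := rank_nullity (cycIcc r' j) V
        have n2 := rank_nullity (cycIcc r (r' - 1)) V
        have n3 := rank_nullity (cycIcc r j) V
        rw [hd] at n1 n2 n3
        have b1 := h1 j
        have b2 := h1 (r' - 1)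
        have cP1 := card_inter_split (K := I) P1U P1D
        have cS2 := card_inter_split (K := I) S2U S2D
        have cP2 := card_inter_split (K := I) P2U P2D
        rw [Finset.inter_univ, hI] at cP1 cS2
        omega
  · -- J-side
    intro j
    refine le_antisymm (tJle j) ?_
    by_cases hjr' : j = r'
    · rw [hjr', cycIcc_full hn r', projDim_univ, Finset.inter_univ, hJ, hd]
    · by_cases hjr : j = r
      · rw [hjr]
        have b1 := h1 (r' - 1)
        omega
      · rcases Nat.lt_or_ge ((r - r').val) ((j - r').val) with hc | hc
        · -- q j > ρ : direct split of [j, r-1]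
          have hcond : ((r' - 1) - j).val < ((r - 1) - j).val := by
            have e1 := val_sub_eq (r' - 1) j r'
            have e2 := val_sub_eq (r - 1) j r'
            rw [val_sub_one_sub_self hn r'] at e1
            rw [hprm1] at e2
            have := (j - r').isLt
            have hqpos : 0 < (j - r').val := val_sub_pos hjr'
            rw [e1, e2]
            split_ifs <;> omega
          obtain ⟨SU, SD⟩ := cycIcc_split hn hcond
          rw [err'] at SU SD
          have hle := projDim_union_le (cycIcc j (r' - 1)) (cycIcc r' (r - 1)) V
          have e2 : projDim (cycIcc j (r - 1)) V
              = projDim (cycIcc j (r' - 1) ∪ cycIcc r' (r - 1)) V := by rw [SU]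
          have b1 := h2 j
          have b2 := h2 r'
          have cJ := card_inter_split (K := J) SU SD
          omega
        · -- q j < ρ (and q j ≥ 1)
          have hqne : (j - r').val ≠ (r - r').val := fun he => hjr (sub_right_cancel he)
          have hqpos : 0 < (j - r').val := val_sub_pos hjr'
          obtain ⟨C1U, C1D⟩ := cycIcc_compl hn (a := j) (b := r' - 1)
            (fun h => hjr' ((sub_one_injective hn h).symm))
          rw [err'] at C1U C1D
          obtain ⟨C2U, C2D⟩ := cycIcc_compl hn (a := j) (b := r - 1)
            (fun h => hjr ((sub_one_injective hn h).symm))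
          rw [err] at C2U C2D
          have hqm1 : ((j - 1) - r').val = (j - r').val - 1 := val_sub_one_sub hn hjr'
          have hcond2 : ((r' - 1) - r).val < ((j - 1) - r).val := by
            have e1 := val_sub_eq (r' - 1) r r'
            have e2 := val_sub_eq (j - 1) r r'
            rw [val_sub_one_sub_self hn r'] at e1
            rw [hqm1] at e2
            rw [e1, e2]
            split_ifs <;> omega
          obtain ⟨PU, PD⟩ := cycIcc_split hn hcond2
          rw [err'] at PU PD
          have PU' : cycIcc r (j - 1) = cycIcc r' (j - 1) ∪ cycIcc r (r' - 1) :=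
            PU.trans (Finset.union_comm _ _)
          have PD' : Disjoint (cycIcc r' (j - 1)) (cycIcc r (r' - 1)) := PD.symm
          have hZ : univ = cycIcc j (r - 1) ∪ (cycIcc r' (j - 1) ∪ cycIcc r (r' - 1)) := by
            rw [← PU']; exact C2U
          have dZ : Disjoint (cycIcc j (r - 1)) (cycIcc r' (j - 1) ∪ cycIcc r (r' - 1)) := by
            rw [← PU']; exact C2D
          have hsup := kerDim_superadd' V C1U C1D WU WD hZ dZ PD'
          have n1 := rank_nullity (cycIcc j (r' - 1)) V
          have n2 := rank_nullity (cycIcc r' (r - 1)) V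
          have n3 := rank_nullity (cycIcc j (r - 1)) V
          rw [hd] at n1 n2 n3
          have b1 := h2 j
          have b2 := h2 r'
          have cC1 := card_inter_split (K := J) C1U C1D
          have cC2 := card_inter_split (K := J) C2U C2D
          have cP := card_inter_split (K := J) PU PD
          rw [Finset.inter_univ, hJ] at cC1 cC2
          omega

end Transfer

/-- The (open) tilted Richardson variety does not depend on the choice of
the sequence `a`. -/
theorem memT_independent_of_a (n : ℕ) [NeZero n] (hn : 2 ≤ n) (u v : Equiv.Perm (Fin n))
    (a a' : ℕ → Fin n)
    (ha : ∀ i, 1 ≤ i → i ≤ n - 1 → shiftedGaleLE (a i) (permSet u i) (permSet v i))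
    (ha' : ∀ i, 1 ≤ i → i ≤ n - 1 → shiftedGaleLE (a' i) (permSet u i) (permSet v i)) :
    (∀ F : CompleteFlag n, memT u v a F ↔ memT u v a' F) ∧
    (∀ F : CompleteFlag n, memT0 u v a F ↔ memT0 u v a' F) := by
  have main : ∀ (b b' : ℕ → Fin n),
      (∀ i, 1 ≤ i → i ≤ n - 1 → shiftedGaleLE (b i) (permSet u i) (permSet v i)) →
      (∀ i, 1 ≤ i → i ≤ n - 1 → shiftedGaleLE (b' i) (permSet u i) (permSet v i)) →
      (∀ F : CompleteFlag n, memT u v b F → memT u v b' F) ∧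
      (∀ F : CompleteFlag n, memT0 u v b F → memT0 u v b' F) := by
    intro b b' hb hb'
    have hkey : ∀ i, 1 ≤ i → i ≤ n - 1 →
        (permSet u i ∩ cycIcc (b' i) (b i - 1)).card
          = (permSet v i ∩ cycIcc (b' i) (b i - 1)).card := by
      intro i h1i h2i
      exact le_antisymm (shifted_count_suffix hn (hb i h1i h2i) (b' i))
        (shifted_count_prefix (hb' i h1i h2i) (b i - 1))
    constructor
    · intro F hF i h1i h2i j
      have hd : Module.finrank ℂ (F.space i) = i := F.dim_eq i (by omega)
      have hIc : (permSet u i).card = i := permSet_card u (by omega)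
      have hJc : (permSet v i).card = i := permSet_card v (by omega)
      obtain ⟨tI, tJ⟩ := transfer_le hn (F.space i) (permSet u i) (permSet v i)
        (b i) (b' i) i hd hIc hJc (hkey i h1i h2i)
        (fun j' => (hF i h1i h2i j').1) (fun j' => (hF i h1i h2i j').2)
      exact ⟨tI j, tJ j⟩
    · intro F hF i h1i h2i j
      have hd : Module.finrank ℂ (F.space i) = i := F.dim_eq i (by omega)
      have hIc : (permSet u i).card = i := permSet_card u (by omega)
      have hJc : (permSet v i).card = i := permSet_card v (by omega)
      obtain ⟨tI, tJ⟩ := transfer_eq hn (F.space i) (permSet u i) (permSet v i)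
        (b i) (b' i) i hd hIc hJc (hkey i h1i h2i)
        (fun j' => (hF i h1i h2i j').1) (fun j' => (hF i h1i h2i j').2)
      exact ⟨tI j, tJ j⟩
  exact ⟨fun F => ⟨fun h => (main a a' ha ha').1 F h, fun h => (main a' a ha' ha).1 F h⟩,
    fun F => ⟨fun h => (main a a' ha ha').2 F h, fun h => (main a' a ha' ha).2 F h⟩⟩
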